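/- Let T be an expandable tree (γ_T > 1) and let 𝒯 ⊆ {0,1}^T be a tree-shift. Then the surface entropy h^{(S)}(𝒯) is positive if and only if 𝒯 has the boundary independence property. -/

import Mathlib

open Filter

/-- A (rooted, locally finite) tree realized as a set of finite words over the
`d` generators: it contains the root (the empty word) and is closed under prefixes. -/
def IsTree {d : ℕ} (T : Set (List (Fin d))) : Prop :=
  ([] : List (Fin d)) ∈ T ∧ ∀ w ∈ T, ∀ u : List (Fin d), u <+: w → u ∈ T

/-- `T_n`: the set of vertices of `T` at distance `n` from the root. -/
def level {d : ℕ} (T : Set (List (Fin d))) (n : ℕ) : Set (List (Fin d)) :=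
  {w ∈ T | w.length = n}

/-- `Δ_n = ∪_{i=0}^n T_i`: the set of vertices of `T` at distance at most `n`. -/
def ball {d : ℕ} (T : Set (List (Fin d))) (n : ℕ) : Set (List (Fin d)) :=
  {w ∈ T | w.length ≤ n}

/-- The statement that the expanding number `γ_T = lim_n |T_{n+1}|/|T_n|` exists
and equals `γ`. -/
def HasExpandingNumber {d : ℕ} (T : Set (List (Fin d))) (γ : ℝ) : Prop :=
  Tendsto (fun n : ℕ => ((level T (n + 1)).ncard : ℝ) / ((level T n).ncard : ℝ)) atTop (nhds γ)

/-- `|P(Δ_n, 𝒯)|`: the number of restrictions of labeled trees of `𝒯` to `Δ_n`. -/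
noncomputable def ballBlockCount {d : ℕ} {A : Type*} (T : Set (List (Fin d)))
    (𝒯 : Set (List (Fin d) → A)) (n : ℕ) : ℕ :=
  Set.ncard ((fun t (w : ball T n) => t (w : List (Fin d))) '' 𝒯)

/-- The entropy of a tree-shift, `h(𝒯) = limsup_n log |P(Δ_n,𝒯)| / |Δ_n|`. -/
noncomputable def treeEntropy {d : ℕ} {A : Type*} (T : Set (List (Fin d)))
    (𝒯 : Set (List (Fin d) → A)) : ℝ :=
  limsup (fun n : ℕ => Real.log (ballBlockCount T 𝒯 n) / ((ball T n).ncard : ℝ)) atTop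

/-- `S` is an independence set for `𝒯`: every assignment of symbols on `S`
extends to an element of `𝒯`. -/
def IsIndepSet {I A : Type*} (𝒯 : Set (I → A)) (S : Set I) : Prop :=
  ∀ u : I → A, ∃ t ∈ 𝒯, ∀ w ∈ S, t w = u w

/-- `𝒯` is a tree-shift on `T`: the set of labelings of `T` avoiding every pattern
from some set `F` of forbidden finite patterns (a pattern is a finitely supported
partial labeling; it appears in `t` at a vertex `g ∈ T` if every cell of the pattern,
translated to sit below `g`, lies in `T` and carries the prescribed label). -/
def IsTreeShift {d : ℕ} {A : Type*} (T : Set (List (Fin d)))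
    (𝒯 : Set (List (Fin d) → A)) : Prop :=
  ∃ F : Set (List (Fin d) → Option A),
    (∀ p ∈ F, {w | p w ≠ none}.Finite) ∧
    𝒯 = {t | ∀ p ∈ F, ∀ g ∈ T,
          ¬ ∀ w : List (Fin d), ∀ a : A, p w = some a → g ++ w ∈ T ∧ t (g ++ w) = a}

/-- The boundary independence property: there are `l ≥ 1` and sets
`S_n ⊆ Δ_n \ Δ_{n−l}` (for `n ≥ l`), each an independence set for `𝒯`, with
`limsup_n |S_n ∩ Δ_n|/|Δ_n| > 0`. -/
def BoundaryIndep {d : ℕ} {A : Type*} (T : Set (List (Fin d)))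
    (𝒯 : Set (List (Fin d) → A)) : Prop :=
  ∃ l : ℕ, 1 ≤ l ∧ ∃ S : ℕ → Set (List (Fin d)),
    (∀ n, l ≤ n → S n ⊆ ball T n \ ball T (n - l)) ∧
    (∀ n, l ≤ n → IsIndepSet 𝒯 (S n)) ∧
    0 < limsup (fun n : ℕ => ((S n ∩ ball T n).ncard : ℝ) / ((ball T n).ncard : ℝ)) atTop

/-- `|B_n^{(S)}(𝒯)|`: the number of restrictions of labeled trees of `𝒯` to `T_n`. -/
noncomputable def levelBlockCount {d : ℕ} {A : Type*} (T : Set (List (Fin d)))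
    (𝒯 : Set (List (Fin d) → A)) (n : ℕ) : ℕ :=
  Set.ncard ((fun t (w : level T n) => t (w : List (Fin d))) '' 𝒯)

/-- The surface entropy of a tree-shift,
`h^{(S)}(𝒯) = limsup_n log |B_n^{(S)}(𝒯)| / |T_n|`. -/
noncomputable def surfaceEntropy {d : ℕ} {A : Type*} (T : Set (List (Fin d)))
    (𝒯 : Set (List (Fin d) → A)) : ℝ :=
  limsup (fun n : ℕ => Real.log (levelBlockCount T 𝒯 n) / ((level T n).ncard : ℝ)) atTop


/-! If `𝒯` has `e^{h |T_n|}` patterns on a level `T_n`, the Sauer–Shelah lemma and a binomial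
tail estimate give an independence set of size `δ |T_n|` inside `T_n`; since `γ_T > 1` forces
`|Δ_n| ≤ K |T_n|`, these sets witness boundary independence with `l = 1`. Conversely, an
independence set of density `c` in the last `l` levels of `Δ_n` puts at least `c |Δ_n| / l` of its
vertices on a single level `T_j`, which then carries at least `2^{c |T_j| / l}` patterns. -/

open Finset Real

section Patterns

variable {I A : Type*}

noncomputable def patternCount (𝒯 : Set (I → A)) (S : Set I) : ℕ :=
  ((fun t (w : S) => t w) '' 𝒯).ncard

theorem IsIndepSet.mono {𝒯 : Set (I → A)} {S S' : Set I} (hS : IsIndepSet 𝒯 S) (h : S' ⊆ S) :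
    IsIndepSet 𝒯 S' := fun u =>
  let ⟨t, ht, htu⟩ := hS u
  ⟨t, ht, fun w hw => htu w (h hw)⟩

variable [Fintype A]

theorem patternCount_le_pow (𝒯 : Set (I → A)) {S : Set I} (hS : S.Finite) :
    patternCount 𝒯 S ≤ Fintype.card A ^ S.ncard := by
  have : Finite S := hS.to_subtype
  calc patternCount 𝒯 S ≤ Nat.card (S → A) := Set.ncard_le_card _
    _ = Fintype.card A ^ S.ncard := by
      rw [Nat.card_fun, Nat.card_eq_fintype_card, Nat.card_coe_set_eq]

theorem pow_le_patternCount [Nonempty A] {𝒯 : Set (I → A)} {S S' : Set I} (hS : S.Finite)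
    (hS' : S' ⊆ S) (hind : IsIndepSet 𝒯 S') :
    Fintype.card A ^ S'.ncard ≤ patternCount 𝒯 S := by
  classical
  have : Finite S := hS.to_subtype
  have : Finite S' := (hS.subset hS').to_subtype
  let P := (fun t (w : S) => t w) '' 𝒯
  have hsurj : Function.Surjective fun (p : P) (w : S') => (p : S → A) ⟨w, hS' w.2⟩ := by
    intro g
    obtain ⟨t, ht, htg⟩ := hind fun w => if h : w ∈ S' then g ⟨w, h⟩ else Classical.arbitrary A
    exact ⟨⟨_, t, ht, rfl⟩, funext fun w => by simpa using htg w w.2⟩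
  calc Fintype.card A ^ S'.ncard = Nat.card (S' → A) := by
        rw [Nat.card_fun, Nat.card_eq_fintype_card, Nat.card_coe_set_eq]
    _ ≤ Nat.card P := Nat.card_le_card_of_surjective _ hsurj
    _ = patternCount 𝒯 S := Nat.card_coe_set_eq P

theorem log_patternCount_le (𝒯 : Set (I → A)) {S : Set I} (hS : S.Finite) :
    log (patternCount 𝒯 S) ≤ S.ncard * log (Fintype.card A) := by
  rcases (patternCount 𝒯 S).eq_zero_or_pos with h0 | hpos
  · rw [h0, Nat.cast_zero, log_zero]
    exact mul_nonneg (Nat.cast_nonneg _) (log_natCast_nonneg _)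
  · rw [← log_pow]
    exact log_le_log (by exact_mod_cast hpos) (by exact_mod_cast patternCount_le_pow 𝒯 hS)

theorem ncard_div_mul_log_le [Nonempty A] {𝒯 : Set (I → A)} {S S' : Set I} (hS : S.Finite)
    (hS' : S' ⊆ S) (hind : IsIndepSet 𝒯 S') :
    (S'.ncard / S.ncard : ℝ) * log (Fintype.card A) ≤ log (patternCount 𝒯 S) / S.ncard := by
  rw [div_mul_eq_mul_div]
  gcongr
  rw [← log_pow]
  exact log_le_log (by positivity) (by exact_mod_cast pow_le_patternCount hS hS' hind)

end Patterns

theorem exists_isIndepSet_of_sum_choose_lt {I : Type*} (𝒯 : Set (I → Bool)) {S : Set I}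
    (hS : S.Finite) {m : ℕ} (h : ∑ k ∈ range m, S.ncard.choose k < patternCount 𝒯 S) :
    ∃ S' ⊆ S, IsIndepSet 𝒯 S' ∧ m ≤ S'.ncard := by
  classical
  have : Fintype S := hS.fintype
  -- encode patterns on `S` by their supports: sets shattered by the resulting family are
  -- independence sets
  let φ : (S → Bool) → Finset S := fun p => univ.filter fun w => p w
  have hφ : Function.Injective φ := fun p q hpq => funext fun w => by
    have := congrArg (w ∈ ·) hpq
    simp only [φ, mem_filter, mem_univ, true_and] at this
    exact Bool.eq_iff_iff.2 (Iff.of_eq this)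
  let 𝒜 : Finset (Finset S) := (Set.toFinite (φ '' ((fun t (w : S) => t w) '' 𝒯))).toFinset
  have h𝒜 : #𝒜 = patternCount 𝒯 S := by
    rw [← Set.ncard_eq_toFinset_card, Set.ncard_image_of_injective _ hφ, patternCount]
  have hvc : m ≤ 𝒜.vcDim := by
    by_contra! hlt
    have hsum : ∑ k ∈ Iic 𝒜.vcDim, (Fintype.card S).choose k ≤ ∑ k ∈ range m, S.ncard.choose k := by
      rw [← Nat.card_eq_fintype_card, Nat.card_coe_set_eq]
      exact sum_le_sum_of_subset fun k hk => mem_range.2 ((mem_Iic.1 hk).trans_lt hlt)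
    have := (card_le_card_shatterer 𝒜).trans (card_shatterer_le_sum_vcDim.trans hsum)
    omega
  have hne : 𝒜.shatterer.Nonempty :=
    ⟨∅, mem_shatterer.2 (shatters_empty.2 (card_pos.1 (by omega)))⟩
  obtain ⟨s, hs, hscard⟩ := exists_mem_eq_sup _ hne card
  refine ⟨Subtype.val '' (s : Set S), Subtype.coe_image_subset _ _, fun u => ?_, ?_⟩
  · obtain ⟨a, ha, hsa⟩ := mem_shatterer.1 hs (filter_subset (fun w : S => u w) s)
    obtain ⟨_, ⟨t, ht, rfl⟩, rfl⟩ := (Set.Finite.mem_toFinset _).1 ha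
    refine ⟨t, ht, ?_⟩
    rintro _ ⟨v, hv, rfl⟩
    have := congrArg (v ∈ ·) hsa
    simp only [φ, mem_inter, mem_filter, mem_univ, true_and, mem_coe.1 hv] at this
    exact Bool.eq_iff_iff.2 (Iff.of_eq this)
  · rw [Set.ncard_image_of_injective _ Subtype.val_injective, Set.ncard_coe_finset, ← hscard]
    exact hvc

theorem sum_range_choose_mul_pow_le (N m : ℕ) {x : ℝ} (hx0 : 0 ≤ x) (hx1 : x ≤ 1) :
    (∑ k ∈ range m, (N.choose k : ℝ)) * x ^ (m - 1) ≤ (1 + x) ^ N := by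
  calc (∑ k ∈ range m, (N.choose k : ℝ)) * x ^ (m - 1)
      ≤ ∑ k ∈ range m, (N.choose k : ℝ) * x ^ k := by
        rw [sum_mul]
        refine sum_le_sum fun k hk => mul_le_mul_of_nonneg_left ?_ (Nat.cast_nonneg _)
        exact pow_le_pow_of_le_one hx0 hx1 (Nat.le_sub_one_of_lt (mem_range.1 hk))
    _ = ∑ k ∈ range (min m (N + 1)), (N.choose k : ℝ) * x ^ k := by
        refine (sum_subset (range_mono (min_le_left _ _)) fun k hk hk' => ?_).symm
        simp only [mem_range, lt_min_iff, not_and, not_lt] at hk hk'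
        rw [Nat.choose_eq_zero_of_lt (hk' hk), Nat.cast_zero, zero_mul]
    _ ≤ ∑ k ∈ range (N + 1), (N.choose k : ℝ) * x ^ k :=
        sum_le_sum_of_subset_of_nonneg (range_mono (min_le_right _ _)) fun _ _ _ => by positivity
    _ = (1 + x) ^ N := by
        rw [add_comm 1 x, add_pow]
        exact sum_congr rfl fun k _ => by rw [one_pow, mul_one, mul_comm]

theorem exists_sum_range_choose_lt_exp {h : ℝ} (hh : 0 < h) :
    ∃ δ : ℝ, 0 < δ ∧ ∀ N : ℕ, 0 < N → ∑ k ∈ range ⌈δ * N⌉₊, (N.choose k : ℝ) < exp (h * N) := by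
  -- the binomial tail below `δ N` grows at most like `exp (N (δ - δ log δ))`, and
  -- `δ - δ log δ → 0` as `δ → 0⁺`
  have hcont : Continuous fun x : ℝ => x - x * log x := continuous_id.sub continuous_mul_log
  have hsmall : ∀ᶠ x in nhdsWithin (0 : ℝ) (Set.Ioi 0), x - x * log x < h ∧ x ∈ Set.Ioo 0 1 := by
    refine Eventually.and (nhdsWithin_le_nhds ((hcont.tendsto 0).eventually (gt_mem_nhds ?_)))
      (Ioo_mem_nhdsGT one_pos)
    simpa using hh
  obtain ⟨δ, hδh, hδ0, hδ1⟩ := hsmall.exists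
  refine ⟨δ, hδ0, fun N hN => ?_⟩
  have hN : (0 : ℝ) < N := by exact_mod_cast hN
  set m := ⌈δ * N⌉₊
  have hm : ((m - 1 : ℕ) : ℝ) < δ * N :=
    Nat.lt_ceil.1 (Nat.sub_lt (Nat.ceil_pos.2 (by positivity)) one_pos)
  have hpow : exp (δ * N * log δ) ≤ δ ^ (m - 1) := by
    rw [← rpow_natCast, rpow_def_of_pos hδ0, mul_comm (log δ)]
    exact exp_le_exp.2 (mul_le_mul_of_nonpos_right hm.le (log_nonpos hδ0.le hδ1.le))
  have h1δ : (1 + δ) ^ N ≤ exp (δ * N) := by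
    rw [mul_comm, exp_nat_mul]
    exact pow_le_pow_left₀ (by positivity) (by linarith [add_one_le_exp δ]) N
  calc ∑ k ∈ range m, (N.choose k : ℝ)
      ≤ (1 + δ) ^ N / δ ^ (m - 1) := by
        rw [le_div_iff₀ (by positivity)]
        exact sum_range_choose_mul_pow_le N m hδ0.le hδ1.le
    _ ≤ exp (δ * N) / exp (δ * N * log δ) := by gcongr
    _ = exp ((δ - δ * log δ) * N) := by rw [← exp_sub]; ring_nf
    _ < exp (h * N) := exp_lt_exp.2 (mul_lt_mul_of_pos_right hδh hN)

theorem exists_isIndepSet_ncard_ge {I : Type*} (𝒯 : Set (I → Bool)) {S : Set I} (hS : S.Finite)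
    (hS0 : 0 < S.ncard) {c δ : ℝ} (hc : 0 < c)
    (hbinom : ∀ N : ℕ, 0 < N → ∑ k ∈ range ⌈δ * N⌉₊, (N.choose k : ℝ) < exp (c * N))
    (hcount : c ≤ log (patternCount 𝒯 S) / S.ncard) :
    ∃ S' ⊆ S, IsIndepSet 𝒯 S' ∧ δ * S.ncard ≤ S'.ncard := by
  have hlog : c * S.ncard ≤ log (patternCount 𝒯 S) := (le_div_iff₀ (by exact_mod_cast hS0)).1 hcount
  have hpos : (0 : ℝ) < patternCount 𝒯 S := by
    by_contra! h0
    rw [le_antisymm h0 (Nat.cast_nonneg _), log_zero] at hlog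
    exact (mul_pos hc (by exact_mod_cast hS0)).not_ge hlog
  have hsum : ∑ k ∈ range ⌈δ * S.ncard⌉₊, S.ncard.choose k < patternCount 𝒯 S := by
    have := (hbinom _ hS0).trans_le ((exp_le_exp.2 hlog).trans_eq (exp_log hpos))
    exact_mod_cast this
  obtain ⟨S', hS'S, hS', hm⟩ := exists_isIndepSet_of_sum_choose_lt 𝒯 hS hsum
  exact ⟨S', hS'S, hS', (Nat.le_ceil _).trans (by exact_mod_cast hm)⟩

theorem exists_sum_range_le_mul_of_tendsto_ratio {a : ℕ → ℕ} {γ : ℝ}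
    (ha : Tendsto (fun n => (a (n + 1) : ℝ) / a n) atTop (nhds γ)) (hγ : 1 < γ) :
    ∃ K : ℝ, 0 < K ∧ ∀ᶠ n in atTop, 0 < a n ∧ ∑ k ∈ range (n + 1), (a k : ℝ) ≤ K * a n := by
  obtain ⟨r, hr1, hrγ⟩ := exists_between hγ
  obtain ⟨N₀, hN₀⟩ := eventually_atTop.1 (ha.eventually (lt_mem_nhds hrγ))
  have hpos : ∀ n ≥ N₀, 0 < a n := fun n hn => by
    by_contra! h0
    have := hN₀ n hn
    rw [Nat.le_zero.1 h0, Nat.cast_zero, div_zero] at this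
    linarith
  have hstep : ∀ n ≥ N₀, r * a n ≤ a (n + 1) := fun n hn =>
    ((lt_div_iff₀ (by exact_mod_cast hpos n hn)).1 (hN₀ n hn)).le
  -- past `N₀` the sequence grows geometrically, so its partial sums stay within `B = r / (r - 1)`
  -- times the last term
  set B := r / (r - 1)
  have hB : (B - 1) * r = B := by
    have := (sub_pos.2 hr1).ne'
    simp only [B]; field_simp; ring
  have hB1 : 1 ≤ B := by rw [le_div_iff₀ (sub_pos.2 hr1)]; linarith
  set C := ∑ k ∈ range N₀, (a k : ℝ)
  have hsum : ∀ n ≥ N₀, ∑ k ∈ range (n + 1), (a k : ℝ) ≤ C + B * a n := by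
    intro n hn
    induction n, hn using Nat.le_induction with
    | base => rw [sum_range_succ]; nlinarith [(Nat.cast_nonneg (a N₀) : (0 : ℝ) ≤ _)]
    | succ n hn ih =>
      rw [sum_range_succ]
      nlinarith [hstep n hn]
  have hC : 0 ≤ C := sum_nonneg fun _ _ => Nat.cast_nonneg _
  refine ⟨C + B, by linarith, eventually_atTop.2 ⟨N₀, fun n hn => ⟨hpos n hn, ?_⟩⟩⟩
  have : (1 : ℝ) ≤ a n := by exact_mod_cast hpos n hn
  nlinarith [hsum n hn]

theorem exists_ncard_le_card_mul_ncard_inter {α ι : Type*} {S : Set α} {t : Finset ι}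
    {A : ι → Set α} (ht : t.Nonempty) (hcov : S ⊆ ⋃ j ∈ t, A j) :
    ∃ j ∈ t, S.ncard ≤ #t * (S ∩ A j).ncard := by
  refine exists_le_of_sum_le ht ?_
  rw [sum_const, smul_eq_mul, ← mul_sum]
  refine Nat.mul_le_mul_left _ ?_
  calc S.ncard = (⋃ j ∈ t, S ∩ A j).ncard := by rw [← Set.inter_iUnion₂, Set.inter_eq_left.2 hcov]
    _ ≤ ∑ j ∈ t, (S ∩ A j).ncard := set_ncard_biUnion_le t _

theorem pos_limsup_iff_frequently_le {f : ℕ → ℝ} (hf0 : ∀ n, 0 ≤ f n) {M : ℝ}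
    (hfM : ∀ n, f n ≤ M) :
    0 < limsup f atTop ↔ ∃ c : ℝ, 0 < c ∧ ∃ᶠ n in atTop, c ≤ f n := by
  constructor
  · intro h
    refine ⟨limsup f atTop / 2, half_pos h, ?_⟩
    exact (frequently_lt_of_lt_limsup (isCoboundedUnder_le_of_le atTop hf0) (half_lt_self h)).mono
      fun _ => le_of_lt
  · rintro ⟨c, hc, hfreq⟩
    exact hc.trans_le (le_limsup_of_frequently_le hfreq (isBoundedUnder_of ⟨M, hfM⟩))

section Tree

variable {d : ℕ} (T : Set (List (Fin d)))

theorem finite_level (n : ℕ) : (level T n).Finite :=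
  (List.finite_length_eq (Fin d) n).subset fun _ hw => hw.2

theorem finite_ball (n : ℕ) : (ball T n).Finite :=
  (List.finite_length_le (Fin d) n).subset fun _ hw => hw.2

theorem level_subset_ball {m n : ℕ} (h : m ≤ n) : level T m ⊆ ball T n :=
  fun _ hw => ⟨hw.1, hw.2 ▸ h⟩

theorem level_subset_ball_diff_ball {m n : ℕ} (h : m < n) : level T n ⊆ ball T n \ ball T m :=
  fun _ hw => ⟨level_subset_ball T le_rfl hw, fun hw' => by have := hw'.2; have := hw.2; omega⟩

theorem ncard_level_le_ncard_ball {m n : ℕ} (h : m ≤ n) : (level T m).ncard ≤ (ball T n).ncard :=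
  Set.ncard_le_ncard (level_subset_ball T h) (finite_ball T n)

theorem ncard_ball_le_sum_ncard_level (n : ℕ) :
    (ball T n).ncard ≤ ∑ k ∈ range (n + 1), (level T k).ncard := by
  have : ball T n = ⋃ k ∈ range (n + 1), level T k := by
    ext w
    simp only [ball, level, Set.mem_ofPred_eq, Set.mem_iUnion, mem_range, exists_prop]
    exact ⟨fun hw => ⟨w.length, by omega, hw.1, rfl⟩, fun ⟨k, hk, hw, hwk⟩ => ⟨hw, by omega⟩⟩
  exact this ▸ set_ncard_biUnion_le _ _

theorem exists_ncard_ball_le_mul_ncard_level {γ : ℝ} (hγ : HasExpandingNumber T γ) (hγ1 : 1 < γ) :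
    ∃ K : ℝ, 0 < K ∧ ∀ᶠ n in atTop,
      0 < (level T n).ncard ∧ ((ball T n).ncard : ℝ) ≤ K * (level T n).ncard := by
  obtain ⟨K, hK, hev⟩ :=
    exists_sum_range_le_mul_of_tendsto_ratio (a := fun n => (level T n).ncard) hγ hγ1
  refine ⟨K, hK, hev.mono fun n ⟨hpos, hsum⟩ => ⟨hpos, ?_⟩⟩
  exact (Nat.cast_le.2 (ncard_ball_le_sum_ncard_level T n)).trans (by push_cast; exact hsum)

theorem exists_ncard_le_mul_ncard_inter_level {l n : ℕ} (hl : 1 ≤ l) (hln : l ≤ n)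
    {S : Set (List (Fin d))} (hS : S ⊆ ball T n \ ball T (n - l)) :
    ∃ j ∈ Ioc (n - l) n, S.ncard ≤ l * (S ∩ level T j).ncard := by
  have hcard : #(Ioc (n - l) n) = l := by rw [Nat.card_Ioc]; omega
  have hcov : S ⊆ ⋃ j ∈ Ioc (n - l) n, level T j := fun w hw => by
    obtain ⟨⟨hwT, hwn⟩, hwl⟩ := hS hw
    have : n - l < w.length := by by_contra! h; exact hwl ⟨hwT, h⟩
    exact Set.mem_biUnion (mem_Ioc.2 ⟨this, hwn⟩) ⟨hwT, rfl⟩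
  simpa only [hcard] using
    exists_ncard_le_card_mul_ncard_inter (by rw [← card_pos, hcard]; omega) hcov

theorem surfaceEntropy_pos_iff {A : Type*} [Fintype A] (𝒯 : Set (List (Fin d) → A)) :
    0 < surfaceEntropy T 𝒯 ↔ ∃ c : ℝ, 0 < c ∧
      ∃ᶠ n in atTop, c ≤ log (levelBlockCount T 𝒯 n) / (level T n).ncard :=
  pos_limsup_iff_frequently_le (fun _ => by positivity) fun n =>
    div_le_of_le_mul₀ (Nat.cast_nonneg _) (log_natCast_nonneg _)
      ((log_patternCount_le 𝒯 (finite_level T n)).trans_eq (mul_comm _ _))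

theorem pos_limsup_ncard_inter_ball_iff (S : ℕ → Set (List (Fin d))) :
    0 < limsup (fun n => ((S n ∩ ball T n).ncard : ℝ) / (ball T n).ncard) atTop ↔
      ∃ c : ℝ, 0 < c ∧ ∃ᶠ n in atTop, c ≤ ((S n ∩ ball T n).ncard : ℝ) / (ball T n).ncard :=
  pos_limsup_iff_frequently_le (fun _ => by positivity) fun n =>
    div_le_one_of_le₀
      (by exact_mod_cast Set.ncard_le_ncard Set.inter_subset_right (finite_ball T n))
      (Nat.cast_nonneg _)

end Tree

section Directions

variable {d : ℕ} (T : Set (List (Fin d)))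

theorem surfaceEntropy_pos_of_boundaryIndep {A : Type*} [Fintype A] [Nontrivial A]
    {𝒯 : Set (List (Fin d) → A)} (h : BoundaryIndep T 𝒯) : 0 < surfaceEntropy T 𝒯 := by
  obtain ⟨l, hl, S, hSsub, hSind, hpos⟩ := h
  obtain ⟨c, hc, hfreq⟩ := (pos_limsup_ncard_inter_ball_iff T S).1 hpos
  have hA : 0 < log (Fintype.card A) := log_pos (by exact_mod_cast Fintype.one_lt_card)
  refine (surfaceEntropy_pos_iff T 𝒯).2 ⟨c / l * log (Fintype.card A), by positivity, ?_⟩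
  rw [frequently_atTop] at hfreq ⊢
  intro N
  obtain ⟨n, hn, hcn⟩ := hfreq (N + l)
  obtain ⟨j, hj, hSj⟩ := exists_ncard_le_mul_ncard_inter_level T hl (by omega) (hSsub n (by omega))
  rw [mem_Ioc] at hj
  refine ⟨j, by omega, le_trans (mul_le_mul_of_nonneg_right ?_ hA.le) (ncard_div_mul_log_le
    (finite_level T j) Set.inter_subset_right ((hSind n (by omega)).mono Set.inter_subset_left))⟩
  rw [Set.inter_eq_left.2 ((hSsub n (by omega)).trans Set.sdiff_subset)] at hcn
  have hball : (0 : ℝ) < (ball T n).ncard := by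
    by_contra! h0
    rw [le_antisymm h0 (Nat.cast_nonneg _), div_zero] at hcn
    linarith
  have hSj' : ((S n).ncard : ℝ) ≤ l * (S n ∩ level T j).ncard := by exact_mod_cast hSj
  have hTj : ((S n ∩ level T j).ncard : ℝ) ≤ (level T j).ncard := by
    exact_mod_cast Set.ncard_le_ncard Set.inter_subset_right (finite_level T j)
  have hjn : ((level T j).ncard : ℝ) ≤ (ball T n).ncard := by
    exact_mod_cast ncard_level_le_ncard_ball T hj.2
  rw [le_div_iff₀ hball] at hcn
  have hl0 : (0 : ℝ) < l := by exact_mod_cast hl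
  rw [div_le_div_iff₀ hl0 (by nlinarith)]
  nlinarith

theorem boundaryIndep_of_frequently_isIndepSet_level {A : Type*} {𝒯 : Set (List (Fin d) → A)}
    {K δ : ℝ} (hK : 0 < K) (hδ : 0 < δ)
    (hgrowth : ∀ᶠ n in atTop,
      0 < (level T n).ncard ∧ ((ball T n).ncard : ℝ) ≤ K * (level T n).ncard)
    (hfreq : ∃ᶠ n in atTop, ∃ S ⊆ level T n, IsIndepSet 𝒯 S ∧ δ * (level T n).ncard ≤ S.ncard) :
    BoundaryIndep T 𝒯 := by
  obtain ⟨n₀, S₀, -, hS₀, -⟩ := hfreq.exists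
  have : ∀ n, ∃ S ⊆ level T n, IsIndepSet 𝒯 S ∧
      ((∃ S ⊆ level T n, IsIndepSet 𝒯 S ∧ δ * (level T n).ncard ≤ S.ncard) →
        δ * (level T n).ncard ≤ S.ncard) := by
    intro n
    by_cases hn : ∃ S ⊆ level T n, IsIndepSet 𝒯 S ∧ δ * (level T n).ncard ≤ S.ncard
    · obtain ⟨S, hS, hSind, hScard⟩ := hn
      exact ⟨S, hS, hSind, fun _ => hScard⟩
    · exact ⟨∅, Set.empty_subset _, hS₀.mono (Set.empty_subset _), fun h => (hn h).elim⟩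
  choose S hSlev hSind hScard using this
  refine ⟨1, le_rfl, S, fun n hn => (hSlev n).trans (level_subset_ball_diff_ball T (by omega)),
    fun n _ => hSind n, (pos_limsup_ncard_inter_ball_iff T S).2 ⟨δ / K, by positivity, ?_⟩⟩
  refine (hfreq.and_eventually hgrowth).mono fun n ⟨hSn, hn, hball⟩ => ?_
  rw [Set.inter_eq_left.2 ((hSlev n).trans (level_subset_ball T le_rfl))]
  have hTn : (0 : ℝ) < (level T n).ncard := by exact_mod_cast hn
  have hnn : ((level T n).ncard : ℝ) ≤ (ball T n).ncard := by
    exact_mod_cast ncard_level_le_ncard_ball T le_rfl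
  have hSn := hScard n hSn
  rw [div_le_div_iff₀ hK (by linarith)]
  nlinarith

theorem boundaryIndep_of_surfaceEntropy_pos {γ : ℝ} (hγ : HasExpandingNumber T γ) (hγ1 : 1 < γ)
    {𝒯 : Set (List (Fin d) → Bool)} (h : 0 < surfaceEntropy T 𝒯) : BoundaryIndep T 𝒯 := by
  obtain ⟨c, hc, hfreq⟩ := (surfaceEntropy_pos_iff T 𝒯).1 h
  obtain ⟨δ, hδ, hbinom⟩ := exists_sum_range_choose_lt_exp hc
  obtain ⟨K, hK, hgrowth⟩ := exists_ncard_ball_le_mul_ncard_level T hγ hγ1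
  refine boundaryIndep_of_frequently_isIndepSet_level T hK hδ hgrowth ?_
  exact (hfreq.and_eventually hgrowth).mono fun n ⟨hcn, hn, _⟩ =>
    exists_isIndepSet_ncard_ge 𝒯 (finite_level T n) hn hc hbinom hcn

end Directions

theorem pos_surfaceEntropy_iff_boundaryIndep_general
    (d : ℕ) (T : Set (List (Fin d)))
    (γ : ℝ) (hγ : HasExpandingNumber T γ) (hγ1 : 1 < γ)
    (𝒯 : Set (List (Fin d) → Bool)) :
    0 < surfaceEntropy T 𝒯 ↔ BoundaryIndep T 𝒯 :=
  ⟨boundaryIndep_of_surfaceEntropy_pos T hγ hγ1, surfaceEntropy_pos_of_boundaryIndep T⟩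

/-- For a tree-shift `𝒯 ⊆ {0,1}^T` on an expandable tree
(`γ_T > 1`), `h^{(S)}(𝒯) > 0` iff `𝒯` has the boundary independence property. -/
theorem pos_surfaceEntropy_iff_boundaryIndep
    (d : ℕ) (T : Set (List (Fin d))) (hT : IsTree T)
    (γ : ℝ) (hγ : HasExpandingNumber T γ) (hγ1 : 1 < γ)
    (𝒯 : Set (List (Fin d) → Bool)) (h𝒯 : IsTreeShift T 𝒯) :
    0 < surfaceEntropy T 𝒯 ↔ BoundaryIndep T 𝒯 :=
  pos_surfaceEntropy_iff_boundaryIndep_general d T γ hγ hγ1 𝒯
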